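/- Let ρ > 0, ψ₀ > 0, A > 0, A_θ > 0, q > 0, and let ψ₁, φ, ψ₂, ψθ₂, u, ω, L, a, b, c, f and the remaining free entries be real numbers. Let M_s and M_θ be the 3×3 matrices with rows, respectively, ( −(Aa/ψ₀)u , 1/ψ₀ , 0 ), ( q − (ψ₁ + 2ψ₁Aa/ψ₀ − Ab)u² , 2(ψ₁/ψ₀)u , 0 ), ( m₃₁ , (φ/ψ₀)L , φu ), and ( −(Ac/A_θ)ω , 0 , 1/A_θ ), ( m₂₁ , (ψ₂/ψ₀)ω , m₂₃ ), ( q − (ψθ₂(A_θ+Ac) − A·A_θ·f)ω² , 0 , 2ψθ₂ω ). Set Υ₁ = (1/ψ₀²)(ψ₁ − Aa/2)² + (1/ψ₀)(Ab − ψ₁) and Υ₂ = (1/A_θ²)(ψθ₂A_θ − Ac/2)² + (1/A_θ)(A(fA_θ + ψθ₂c) − ψθ₂A_θ), and assume Υ₁ ≥ 0 and Υ₂ ≥ 0. Then all eigenvalues of M_s and of M_θ are real, with λ₊ˢ ≠ λ₋ˢ and λ₊^θ ≠ λ₋^θ, where λ±ˢ = ((2ψ₁ − Aa)/(2ψ₀))u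 ± √(q/ψ₀ + Υ₁u²) and λ±^θ = ((2ψθ₂A_θ − Ac)/(2A_θ))ω ± √(q/A_θ + Υ₂ω²). If moreover φu ∉ {λ₊ˢ, λ₋ˢ}, then M_s has three distinct real eigenvalues and ℝ³ admits a basis of eigenvectors of M_s; and if (ψ₂/ψ₀)ω ∉ {λ₊^θ, λ₋^θ}, then the same conclusion holds for M_θ. -/

import Mathlib

/-!
In both matrices one eigenvalue splits off: the third column of `M_s` is `φ u` times the third
basis vector, and the second column of `M_θ` is `(ψ₂/ψ₀) ω` times the second one. The
characteristic polynomial is therefore `(X - r) ((X - μ)² - V)`, where the quadratic factor comes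
from the remaining `2 × 2` block and `V = q/ψ₀ + Υ₁ u²` (resp. `q/A_θ + Υ₂ ω²`) is positive since
`q > 0` and `Υ ≥ 0`. So every root is real, the roots `μ ± √V` are distinct, and if `r` differs
from both, eigenvectors for the three distinct eigenvalues are linearly independent.
-/

open Matrix

/-- The coefficient matrix `M_s` (axial direction) of the quasilinear form of the
2D blood-flow model, with the state abstracted into real parameters. -/
noncomputable def Ms (ψ₀ ψ₁ φ A u L a b q m₃₁ : ℝ) : Matrix (Fin 3) (Fin 3) ℝ :=
  !![-(A * a / ψ₀) * u, 1 / ψ₀, 0;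
     q - (ψ₁ + 2 * ψ₁ * A * a / ψ₀ - A * b) * u ^ 2, 2 * (ψ₁ / ψ₀) * u, 0;
     m₃₁, (φ / ψ₀) * L, φ * u]

/-- The coefficient matrix `M_θ` (angular direction) of the quasilinear form of the
2D blood-flow model, with the state abstracted into real parameters. -/
noncomputable def Mθ (ψ₀ Aθ ψ₂ ψθ₂ A ω c f q m₂₁ m₂₃ : ℝ) : Matrix (Fin 3) (Fin 3) ℝ :=
  !![-(A * c / Aθ) * ω, 0, 1 / Aθ;
     m₂₁, (ψ₂ / ψ₀) * ω, m₂₃;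
     q - (ψθ₂ * (Aθ + A * c) - A * Aθ * f) * ω ^ 2, 0, 2 * ψθ₂ * ω]

open Polynomial

namespace Matrix

variable {n K : Type*} [Fintype n] [DecidableEq n] [Field K]

theorem charpoly_eq_of_forall_det_scalar_sub [Infinite K] {M : Matrix n n K} {p : K[X]}
    (h : ∀ x, (scalar n x - M).det = p.eval x) : M.charpoly = p :=
  Polynomial.funext fun x => by rw [eval_charpoly, h]

theorem spectrum_eq_of_charpoly_eq_prod {M : Matrix n n K} {s : Multiset K}
    (h : M.charpoly = (s.map fun a => X - C a).prod) : spectrum K M = {a | a ∈ s} := by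
  ext a
  rw [mem_spectrum_iff_isRoot_charpoly, h, ← mem_roots (monic_multiset_prod_of_monic _ _
    fun a _ => monic_X_sub_C a).ne_zero, roots_multiset_prod_X_sub_C]
  rfl

theorem spectrum_map_eq_image_of_charpoly_eq_prod {L : Type*} [Field L] (f : K →+* L)
    {M : Matrix n n K} {s : Multiset K} (h : M.charpoly = (s.map fun a => X - C a).prod) :
    spectrum L (M.map f) = f '' {a | a ∈ s} := by
  rw [spectrum_eq_of_charpoly_eq_prod (s := s.map f)]
  · ext; simp
  · rw [charpoly_map, h, Polynomial.map_multiset_prod, Multiset.map_map, Multiset.map_map]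
    simp

theorem exists_linearIndependent_eigenvectors_of_ncard_spectrum (M : Matrix n n K) {m : ℕ}
    (hm : (spectrum K M).ncard = m) :
    ∃ v : Fin m → n → K, LinearIndependent K v ∧ ∀ i, ∃ μ : K, M *ᵥ v i = μ • v i := by
  have e : spectrum K M ≃ Fin m := Finite.equivFinOfCardEq (by rwa [Nat.card_coe_set_eq])
  have hev (μ : spectrum K M) : ∃ w, Module.End.HasEigenvector M.toLin' μ w := by
    refine (Module.End.hasEigenvalue_iff_mem_spectrum.2 ?_).exists_hasEigenvector
    rw [spectrum_toLin']
    exact μ.2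
  choose w hw using hev
  refine ⟨w ∘ e.symm, ?_, fun i => ⟨e.symm i, ?_⟩⟩
  · exact (Module.End.eigenvectors_linearIndependent' M.toLin' _ Subtype.val_injective w
      hw).comp _ e.symm.injective
  · simpa using (hw (e.symm i)).apply_eq_smul

theorem spectrum_of_charpoly_eq_X_sub_C_mul_sq_sub_C (M : Matrix n n ℝ) {r μ V : ℝ}
    (hV : 0 < V) (h : M.charpoly = (X - C r) * ((X - C μ) ^ 2 - C V)) :
    spectrum ℝ M = {r, μ + √V, μ - √V} ∧ μ + √V ≠ μ - √V ∧
    (∀ z ∈ spectrum ℂ (M.map (fun x : ℝ => (x : ℂ))), z.im = 0) ∧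
    (r ≠ μ + √V → r ≠ μ - √V → (spectrum ℝ M).ncard = 3 ∧
      ∃ v : Fin 3 → n → ℝ, LinearIndependent ℝ v ∧ ∀ i, ∃ a : ℝ, M *ᵥ v i = a • v i) := by
  have hroots : M.charpoly = (({r, μ + √V, μ - √V} : Multiset ℝ).map fun a => X - C a).prod := by
    have hV' : C V = C √V ^ 2 := by rw [← C_pow, Real.sq_sqrt hV.le]
    rw [h, hV']
    simp only [Multiset.insert_eq_cons, Multiset.map_cons, Multiset.prod_cons,
      Multiset.map_singleton, Multiset.prod_singleton, C_add, C_sub]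
    ring
  have hspec : spectrum ℝ M = {r, μ + √V, μ - √V} := by
    rw [spectrum_eq_of_charpoly_eq_prod hroots]
    ext; simp
  have hne : μ + √V ≠ μ - √V := ne_of_gt (by linarith [Real.sqrt_pos.2 hV])
  refine ⟨hspec, hne, ?_, fun hr₁ hr₂ => ?_⟩
  · intro z hz
    rw [show M.map (fun x : ℝ => (x : ℂ)) = M.map Complex.ofRealHom from rfl,
      spectrum_map_eq_image_of_charpoly_eq_prod _ hroots] at hz
    obtain ⟨a, -, rfl⟩ := hz
    exact Complex.ofReal_im a
  · have hcard : (spectrum ℝ M).ncard = 3 := Set.ncard_eq_three.2 ⟨_, _, _, hr₁, hr₂, hne, hspec⟩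
    exact ⟨hcard, exists_linearIndependent_eigenvectors_of_ncard_spectrum M hcard⟩

end Matrix

theorem charpoly_Ms (ψ₀ ψ₁ φ A u L a b q m₃₁ : ℝ) :
    (Ms ψ₀ ψ₁ φ A u L a b q m₃₁).charpoly = (X - C (φ * u)) *
      ((X - C ((2 * ψ₁ - A * a) / (2 * ψ₀) * u)) ^ 2 - C (q / ψ₀
        + ((1 / ψ₀ ^ 2) * (ψ₁ - A * a / 2) ^ 2 + (1 / ψ₀) * (A * b - ψ₁)) * u ^ 2)) :=
  charpoly_eq_of_forall_det_scalar_sub fun x => by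
    simp only [Ms, det_fin_three, scalar_apply, Matrix.sub_apply, diagonal_apply, of_apply,
      cons_val', cons_val_zero, cons_val_one, cons_val, cons_val_fin_one, Fin.isValue, Fin.reduceEq,
      if_true, if_false, eval_mul, eval_sub, eval_pow, eval_X, eval_C]
    ring

theorem charpoly_Mθ (ψ₀ Aθ ψ₂ ψθ₂ A ω c f q m₂₁ m₂₃ : ℝ) (hAθ : Aθ ≠ 0) :
    (Mθ ψ₀ Aθ ψ₂ ψθ₂ A ω c f q m₂₁ m₂₃).charpoly = (X - C (ψ₂ / ψ₀ * ω)) *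
      ((X - C ((2 * ψθ₂ * Aθ - A * c) / (2 * Aθ) * ω)) ^ 2 - C (q / Aθ
        + ((1 / Aθ ^ 2) * (ψθ₂ * Aθ - A * c / 2) ^ 2
          + (1 / Aθ) * (A * (f * Aθ + ψθ₂ * c) - ψθ₂ * Aθ)) * ω ^ 2)) :=
  charpoly_eq_of_forall_det_scalar_sub fun x => by
    simp only [Mθ, det_fin_three, scalar_apply, Matrix.sub_apply, diagonal_apply, of_apply,
      cons_val', cons_val_zero, cons_val_one, cons_val, cons_val_fin_one, Fin.isValue, Fin.reduceEq,
      if_true, if_false, eval_mul, eval_sub, eval_pow, eval_X, eval_C]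
    field_simp
    ring

theorem stmt3_general (ψ₀ A Aθ q ψ₁ φ ψ₂ ψθ₂ u ω L a b c f m₃₁ m₂₁ m₂₃ : ℝ)
    (hψ₀ : 0 < ψ₀) (hAθ : 0 < Aθ) (hq : 0 < q)
    (Υ₁ Υ₂ : ℝ)
    (hΥ₁ : Υ₁ = (1 / ψ₀ ^ 2) * (ψ₁ - A * a / 2) ^ 2 + (1 / ψ₀) * (A * b - ψ₁))
    (hΥ₂ : Υ₂ = (1 / Aθ ^ 2) * (ψθ₂ * Aθ - A * c / 2) ^ 2
        + (1 / Aθ) * (A * (f * Aθ + ψθ₂ * c) - ψθ₂ * Aθ))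
    (hΥ₁nn : 0 ≤ Υ₁) (hΥ₂nn : 0 ≤ Υ₂)
    (lamPs lamMs lamPθ lamMθ : ℝ)
    (hlamPs : lamPs = ((2 * ψ₁ - A * a) / (2 * ψ₀)) * u + Real.sqrt (q / ψ₀ + Υ₁ * u ^ 2))
    (hlamMs : lamMs = ((2 * ψ₁ - A * a) / (2 * ψ₀)) * u - Real.sqrt (q / ψ₀ + Υ₁ * u ^ 2))
    (hlamPθ : lamPθ = ((2 * ψθ₂ * Aθ - A * c) / (2 * Aθ)) * ω + Real.sqrt (q / Aθ + Υ₂ * ω ^ 2))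
    (hlamMθ : lamMθ = ((2 * ψθ₂ * Aθ - A * c) / (2 * Aθ)) * ω - Real.sqrt (q / Aθ + Υ₂ * ω ^ 2)) :
    spectrum ℝ (Ms ψ₀ ψ₁ φ A u L a b q m₃₁) = {φ * u, lamPs, lamMs} ∧
    lamPs ≠ lamMs ∧
    spectrum ℝ (Mθ ψ₀ Aθ ψ₂ ψθ₂ A ω c f q m₂₁ m₂₃) = {(ψ₂ / ψ₀) * ω, lamPθ, lamMθ} ∧
    lamPθ ≠ lamMθ ∧
    (∀ z ∈ spectrum ℂ ((Ms ψ₀ ψ₁ φ A u L a b q m₃₁).map (fun x : ℝ => (x : ℂ))), z.im = 0) ∧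
    (∀ z ∈ spectrum ℂ ((Mθ ψ₀ Aθ ψ₂ ψθ₂ A ω c f q m₂₁ m₂₃).map (fun x : ℝ => (x : ℂ))),
      z.im = 0) ∧
    (φ * u ≠ lamPs → φ * u ≠ lamMs →
      (spectrum ℝ (Ms ψ₀ ψ₁ φ A u L a b q m₃₁)).ncard = 3 ∧
      ∃ v : Fin 3 → (Fin 3 → ℝ), LinearIndependent ℝ v ∧
        ∀ i, ∃ μ : ℝ, (Ms ψ₀ ψ₁ φ A u L a b q m₃₁).mulVec (v i) = μ • v i) ∧
    ((ψ₂ / ψ₀) * ω ≠ lamPθ → (ψ₂ / ψ₀) * ω ≠ lamMθ →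
      (spectrum ℝ (Mθ ψ₀ Aθ ψ₂ ψθ₂ A ω c f q m₂₁ m₂₃)).ncard = 3 ∧
      ∃ v : Fin 3 → (Fin 3 → ℝ), LinearIndependent ℝ v ∧
        ∀ i, ∃ μ : ℝ, (Mθ ψ₀ Aθ ψ₂ ψθ₂ A ω c f q m₂₁ m₂₃).mulVec (v i) = μ • v i) := by
  subst hΥ₁ hΥ₂ hlamPs hlamMs hlamPθ hlamMθ
  obtain ⟨hs₁, hs₂, hs₃, hs₄⟩ := spectrum_of_charpoly_eq_X_sub_C_mul_sq_sub_C _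
    (by positivity) (charpoly_Ms ψ₀ ψ₁ φ A u L a b q m₃₁)
  obtain ⟨hθ₁, hθ₂, hθ₃, hθ₄⟩ := spectrum_of_charpoly_eq_X_sub_C_mul_sq_sub_C _
    (by positivity) (charpoly_Mθ ψ₀ Aθ ψ₂ ψθ₂ A ω c f q m₂₁ m₂₃ hAθ.ne')
  exact ⟨hs₁, hs₂, hθ₁, hθ₂, hs₃, hθ₃, hs₄, hθ₄⟩

theorem stmt3 (ρ ψ₀ A Aθ q ψ₁ φ ψ₂ ψθ₂ u ω L a b c f m₃₁ m₂₁ m₂₃ : ℝ)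
    (hρ : 0 < ρ) (hψ₀ : 0 < ψ₀) (hA : 0 < A) (hAθ : 0 < Aθ) (hq : 0 < q)
    (Υ₁ Υ₂ : ℝ)
    (hΥ₁ : Υ₁ = (1 / ψ₀ ^ 2) * (ψ₁ - A * a / 2) ^ 2 + (1 / ψ₀) * (A * b - ψ₁))
    (hΥ₂ : Υ₂ = (1 / Aθ ^ 2) * (ψθ₂ * Aθ - A * c / 2) ^ 2
        + (1 / Aθ) * (A * (f * Aθ + ψθ₂ * c) - ψθ₂ * Aθ))
    (hΥ₁nn : 0 ≤ Υ₁) (hΥ₂nn : 0 ≤ Υ₂)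
    (lamPs lamMs lamPθ lamMθ : ℝ)
    (hlamPs : lamPs = ((2 * ψ₁ - A * a) / (2 * ψ₀)) * u + Real.sqrt (q / ψ₀ + Υ₁ * u ^ 2))
    (hlamMs : lamMs = ((2 * ψ₁ - A * a) / (2 * ψ₀)) * u - Real.sqrt (q / ψ₀ + Υ₁ * u ^ 2))
    (hlamPθ : lamPθ = ((2 * ψθ₂ * Aθ - A * c) / (2 * Aθ)) * ω + Real.sqrt (q / Aθ + Υ₂ * ω ^ 2))
    (hlamMθ : lamMθ = ((2 * ψθ₂ * Aθ - A * c) / (2 * Aθ)) * ω - Real.sqrt (q / Aθ + Υ₂ * ω ^ 2)) :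
    spectrum ℝ (Ms ψ₀ ψ₁ φ A u L a b q m₃₁) = {φ * u, lamPs, lamMs} ∧
    lamPs ≠ lamMs ∧
    spectrum ℝ (Mθ ψ₀ Aθ ψ₂ ψθ₂ A ω c f q m₂₁ m₂₃) = {(ψ₂ / ψ₀) * ω, lamPθ, lamMθ} ∧
    lamPθ ≠ lamMθ ∧
    (∀ z ∈ spectrum ℂ ((Ms ψ₀ ψ₁ φ A u L a b q m₃₁).map (fun x : ℝ => (x : ℂ))), z.im = 0) ∧
    (∀ z ∈ spectrum ℂ ((Mθ ψ₀ Aθ ψ₂ ψθ₂ A ω c f q m₂₁ m₂₃).map (fun x : ℝ => (x : ℂ))),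
      z.im = 0) ∧
    (φ * u ≠ lamPs → φ * u ≠ lamMs →
      (spectrum ℝ (Ms ψ₀ ψ₁ φ A u L a b q m₃₁)).ncard = 3 ∧
      ∃ v : Fin 3 → (Fin 3 → ℝ), LinearIndependent ℝ v ∧
        ∀ i, ∃ μ : ℝ, (Ms ψ₀ ψ₁ φ A u L a b q m₃₁).mulVec (v i) = μ • v i) ∧
    ((ψ₂ / ψ₀) * ω ≠ lamPθ → (ψ₂ / ψ₀) * ω ≠ lamMθ →
      (spectrum ℝ (Mθ ψ₀ Aθ ψ₂ ψθ₂ A ω c f q m₂₁ m₂₃)).ncard = 3 ∧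
      ∃ v : Fin 3 → (Fin 3 → ℝ), LinearIndependent ℝ v ∧
        ∀ i, ∃ μ : ℝ, (Mθ ψ₀ Aθ ψ₂ ψθ₂ A ω c f q m₂₁ m₂₃).mulVec (v i) = μ • v i) :=
  stmt3_general ψ₀ A Aθ q ψ₁ φ ψ₂ ψθ₂ u ω L a b c f m₃₁ m₂₁ m₂₃ hψ₀ hAθ hq Υ₁ Υ₂ hΥ₁ hΥ₂ hΥ₁nn hΥ₂nn
    lamPs lamMs lamPθ lamMθ hlamPs hlamMs hlamPθ hlamMθ
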